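/- arXiv:2002.06063 — 3 statements merged into one kernel-verified Lean document; each statement's English description precedes it below -/
import Mathlib

section
/- Every point (θ,ω) with θω = 1/2 and θ,ω ∈ [−2,2] is a stationary point of f(θ,ω) = θ²ω² − θω but is not a Nash equilibrium of the max-min problem on [−2,2]². -/
theorem stmt_2 (f : ℝ → ℝ → ℝ) (hf : ∀ θ ω, f θ ω = θ^2 * ω^2 - θ * ω)
    (θ ω : ℝ) (hθ : θ ∈ Set.Icc (-2:ℝ) 2) (hω : ω ∈ Set.Icc (-2:ℝ) 2)
    (h : θ * ω = 1/2) :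
    (deriv (fun x => f x ω) θ = 0 ∧ deriv (fun y => f θ y) ω = 0) ∧
    ¬((∀ θ' ∈ Set.Icc (-2:ℝ) 2, f θ' ω ≤ f θ ω) ∧
      (∀ ω' ∈ Set.Icc (-2:ℝ) 2, f θ ω ≤ f θ ω')) := by
  have e1 : (fun x => f x ω) = fun x => x^2 * ω^2 - x * ω := funext fun x => hf x ω
  have e2 : (fun y => f θ y) = fun y => θ^2 * y^2 - θ * y := funext fun y => hf θ y
  have d1 : HasDerivAt (fun x : ℝ => x^2 * ω^2 - x * ω) (2*θ*ω^2 - ω) θ := by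
    have := ((hasDerivAt_pow 2 θ).mul_const (ω^2)).fun_sub ((hasDerivAt_id θ).mul_const ω)
    simpa using this
  have d2 : HasDerivAt (fun y : ℝ => θ^2 * y^2 - θ * y) (θ^2*(2*ω) - θ) ω := by
    have := ((hasDerivAt_pow 2 ω).const_mul (θ^2)).fun_sub ((hasDerivAt_id ω).const_mul θ)
    simpa [mul_comm] using this
  refine ⟨⟨?_, ?_⟩, ?_⟩
  · rw [e1, d1.deriv, show 2*θ*ω^2 - ω = ω*(2*(θ*ω)-1) from by ring, h]; ring
  · rw [e2, d2.deriv, show θ^2*(2*ω) - θ = θ*(2*(θ*ω)-1) from by ring, h]; ring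
  · rintro ⟨h1, _⟩
    have hm : -θ ∈ Set.Icc (-2:ℝ) 2 := ⟨by linarith [hθ.2], by linarith [hθ.1]⟩
    have := h1 (-θ) hm
    rw [hf, hf] at this
    nlinarith [this, h]
end

section
/- The point (0,0) is the unique Nash equilibrium of the saddle-point problem max_θ min_ω f(θ,ω) = θω − θ²ω² on [−2,2]×[−2,2]. -/
theorem stmt_3 (f : ℝ → ℝ → ℝ) (hf : ∀ θ ω, f θ ω = θ * ω - θ^2 * ω^2)
    (θs ωs : ℝ) (hθs : θs ∈ Set.Icc (-2:ℝ) 2) (hωs : ωs ∈ Set.Icc (-2:ℝ) 2) :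
    ((∀ θ ∈ Set.Icc (-2:ℝ) 2, f θ ωs ≤ f θs ωs) ∧
     (∀ ω ∈ Set.Icc (-2:ℝ) 2, f θs ωs ≤ f θs ω)) ↔ (θs = 0 ∧ ωs = 0) := by
  obtain ⟨hθ1, hθ2⟩ := hθs
  obtain ⟨hω1, hω2⟩ := hωs
  constructor
  · rintro ⟨h1, h2⟩
    have e1 := h1 0 ⟨by norm_num, by norm_num⟩
    have e2 := h2 0 ⟨by norm_num, by norm_num⟩
    rw [hf, hf] at e1
    rw [hf, hf] at e2
    have hz : θs * ωs - θs^2 * ωs^2 = 0 := by nlinarith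
    have hp : θs * ωs = 0 ∨ θs * ωs = 1 := by
      rcases mul_eq_zero.mp (by nlinarith : θs * ωs * (1 - θs * ωs) = 0) with h | h
      · exact Or.inl h
      · exact Or.inr (by linarith)
    rcases hp with hp | hp
    · rcases mul_eq_zero.mp hp with h0 | h0
      · refine ⟨h0, ?_⟩
        by_contra hne
        have hω2pos : 0 < ωs^2 := by positivity
        have := h1 (ωs/8) ⟨by linarith, by linarith⟩
        rw [hf, hf] at this
        subst h0
        nlinarith [mul_le_mul_of_nonneg_left (show ωs^2 ≤ 4 by nlinarith) hω2pos.le]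
      · refine ⟨?_, h0⟩
        by_contra hne
        have hθ2pos : 0 < θs^2 := by positivity
        have := h2 (-θs/8) ⟨by linarith, by linarith⟩
        rw [hf, hf] at this
        subst h0
        nlinarith [mul_le_mul_of_nonneg_left (show θs^2 ≤ 4 by nlinarith) hθ2pos.le]
    · exfalso
      have := h2 (-ωs) ⟨by linarith, by linarith⟩
      rw [hf, hf] at this
      nlinarith
  · rintro ⟨rfl, rfl⟩
    constructor <;> intro x hx <;> simp [hf]
end

section
/- Along the Newton dynamics for f(θ,ω) = θω − θ²ω², i.e. θ'(t) = (ω − 2θω²)/(−2ω²) and ω'(t) = −(θ − 2θ²ω)/(−2θ²) (with θ(t), ω(t) ≠ 0), the product θ(t)ω(t) is constant in t. -/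
theorem stmt_9 (θ ω : ℝ → ℝ)
    (hθ0 : ∀ t, θ t ≠ 0) (hω0 : ∀ t, ω t ≠ 0)
    (hθ : ∀ t, HasDerivAt θ ((ω t - 2 * θ t * (ω t)^2) / (-(2 * (ω t)^2))) t)
    (hω : ∀ t, HasDerivAt ω (-((θ t - 2 * (θ t)^2 * ω t) / (-(2 * (θ t)^2)))) t) :
    ∀ t, θ t * ω t = θ 0 * ω 0 := by
  have key : ∀ t, HasDerivAt (fun t => θ t * ω t) 0 t := by
    intro t
    have h := (hθ t).mul (hω t)
    have e : (ω t - 2 * θ t * (ω t)^2) / (-(2 * (ω t)^2)) * ω t +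
        θ t * -((θ t - 2 * (θ t)^2 * ω t) / (-(2 * (θ t)^2))) = 0 := by
      field_simp [hθ0 t, hω0 t]
      ring
    rwa [e] at h
  intro t
  have := fun t => (key t).deriv
  have hc := is_const_of_deriv_eq_zero (f := fun t => θ t * ω t)
    (fun t => (key t).differentiableAt) (fun t => (key t).deriv) t 0
  simpa using hc
end
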